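/- arXiv:math/0005299 — 7 statements merged into one kernel-verified Lean document; each statement's English description precedes it below -/
import Mathlib

section
/- Let G be a group and let α be a U(1)-valued 2-cocycle on G. If g, h, k ∈ G satisfy gh = hg and gk = kg, then γ(α)(g, hk) = γ(α)(g,h)·γ(α)(g,k). -/
/-- For a `U(1)`-valued 2-cocycle `α` on a group `G`, if `g` commutes with
`h` and with `k`, then the phase `γ(α)(g,h) = α(g,h)·α(h,g)⁻¹` satisfies
`γ(α)(g, hk) = γ(α)(g,h) · γ(α)(g,k)`. -/
theorem phase_mul_right {G : Type*} [Group G] (α : G → G → Circle)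
    (hα_one_right : ∀ g : G, α g 1 = 1) (hα_one_left : ∀ g : G, α 1 g = 1)
    (hα_cocycle : ∀ g h k : G, α g (h * k) * α h k = α g h * α (g * h) k) :
    ∀ g h k : G, g * h = h * g → g * k = k * g →
      α g (h * k) * (α (h * k) g)⁻¹ = (α g h * (α h g)⁻¹) * (α g k * (α k g)⁻¹) := by
  intro g h k hgh hgk
  have e1 := hα_cocycle g h k
  have e2 := hα_cocycle h k g
  have e3 := hα_cocycle h g k
  rw [← hgk] at e2
  rw [hgh] at e1
  have E1 := congrArg (fun z : Circle => (z : ℂ)) e1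
  have E2 := congrArg (fun z : Circle => (z : ℂ)) e2
  have E3 := congrArg (fun z : Circle => (z : ℂ)) e3
  push_cast at E1 E2 E3
  ext
  push_cast
  field_simp
  have hp : (α h k : ℂ) ≠ 0 := Circle.coe_ne_zero _
  apply mul_left_cancel₀ hp
  linear_combination (α h g : ℂ) * (α k g : ℂ) * E1 + (α g h : ℂ) * (α g k : ℂ) * E2
    - (α g h : ℂ) * (α k g : ℂ) * E3
end

section
/- Let G be a group, let α be a U(1)-valued 2-cocycle on G, and fix g ∈ G. Then the map L^α_g : C(g) → U(1) defined on the centralizer C(g) = {h ∈ G : gh = hg} by L^α_g(h) = γ(α)(g,h) is a group homomorphism from the centralizer subgroup C(g) to U(1). -/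
/-- For a `U(1)`-valued 2-cocycle `α` on a group `G` and `g ∈ G`, the
twisted character `L^α_g : C(g) → U(1)`, `h ↦ γ(α)(g,h) = α(g,h)·α(h,g)⁻¹`, is a group
homomorphism from the centralizer subgroup `C(g) = {h : g*h = h*g}` to `U(1)`. -/
theorem twisted_character_is_hom {G : Type*} [Group G] (α : G → G → Circle)
    (hα_one_right : ∀ g : G, α g 1 = 1) (hα_one_left : ∀ g : G, α 1 g = 1)
    (hα_cocycle : ∀ g h k : G, α g (h * k) * α h k = α g h * α (g * h) k)
    (g : G) :
    ∃ φ : Subgroup.centralizer ({g} : Set G) →* Circle,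
      ∀ h : Subgroup.centralizer ({g} : Set G),
        φ h = α g (h : G) * (α (h : G) g)⁻¹ := by
  have key : ∀ h k : G, g * h = h * g → g * k = k * g →
      α g (h * k) * (α (h * k) g)⁻¹ =
        (α g h * (α h g)⁻¹) * (α g k * (α k g)⁻¹) := by
    intro h k hh hk
    have e1 := hα_cocycle g h k
    have e2 := hα_cocycle h k g
    have e3 := hα_cocycle h g k
    rw [hk, ← hh] at e3
    have E1 : α g (h * k) = α g h * α (g * h) k * (α h k)⁻¹ := by
      rw [eq_mul_inv_iff_mul_eq]; exact e1
    have E2 : α (h * k) g = (α h k)⁻¹ * (α h (k * g) * α k g) := by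
      rw [eq_inv_mul_iff_mul_eq]; exact e2.symm
    have E3 : α (g * h) k = α h (k * g) * α g k * (α h g)⁻¹ := by
      rw [eq_mul_inv_iff_mul_eq, mul_comm]
      exact e3.symm
    rw [E1, E2, E3]
    apply Circle.coe_injective
    push_cast
    field_simp
  refine ⟨{ toFun := fun h => α g (h : G) * (α (h : G) g)⁻¹,
            map_one' := by simp [hα_one_left, hα_one_right],
            map_mul' := fun h k => ?_ }, fun h => rfl⟩
  have hh := h.2; have hk := k.2
  rw [Subgroup.mem_centralizer_singleton_iff] at hh hk
  exact key h k hh.symm hk.symm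
end

section
/- Let G be a group, let α be a U(1)-valued 2-cocycle on G, and let g₁, …, g_k, h ∈ G be such that h commutes with each gᵢ. Then γ(α)(g₁⋯g_k, h) = γ(α)(g₁,h)·γ(α)(g₂,h) ⋯ γ(α)(g_k,h). -/
lemma phase_mul_aux {G : Type*} [Group G] (α : G → G → Circle)
    (hα_cocycle : ∀ g h k : G, α g (h * k) * α h k = α g h * α (g * h) k)
    (g g' h : G) (hg : g * h = h * g) (hg' : g' * h = h * g') :
    α (g * g') h * (α h (g * g'))⁻¹ =
      (α g h * (α h g)⁻¹) * (α g' h * (α h g')⁻¹) := by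
  have e1 := hα_cocycle g g' h
  have e2 := hα_cocycle g h g'
  have e3 := hα_cocycle h g g'
  rw [hg'] at e1
  rw [hg] at e2
  have hA : α (g * g') h = (α g g')⁻¹ * (α g (h * g') * α g' h) :=
    (eq_inv_mul_iff_mul_eq).mpr e1.symm
  have hB : α h (g * g') = α h g * α (h * g) g' * (α g g')⁻¹ :=
    (eq_mul_inv_iff_mul_eq).mpr e3
  have hC : α g (h * g') = α g h * α (h * g) g' * (α h g')⁻¹ :=
    (eq_mul_inv_iff_mul_eq).mpr e2
  rw [hA, hB, hC]
  ext
  push_cast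
  field_simp

/-- For a `U(1)`-valued 2-cocycle `α` on `G` and elements
`g₁, …, g_k, h ∈ G` such that `h` commutes with each `gᵢ`, the phase satisfies
`γ(α)(g₁⋯g_k, h) = γ(α)(g₁,h)·γ(α)(g₂,h)⋯γ(α)(g_k,h)`. -/
theorem phase_list_prod {G : Type*} [Group G] (α : G → G → Circle)
    (hα_one_right : ∀ g : G, α g 1 = 1) (hα_one_left : ∀ g : G, α 1 g = 1)
    (hα_cocycle : ∀ g h k : G, α g (h * k) * α h k = α g h * α (g * h) k) :
    ∀ (l : List G) (h : G), (∀ g ∈ l, g * h = h * g) →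
      α l.prod h * (α h l.prod)⁻¹ =
        (l.map (fun g => α g h * (α h g)⁻¹)).prod := by
  intro l
  induction l with
  | nil =>
      intro h _
      simp [hα_one_right, hα_one_left]
  | cons g t ih =>
      intro h hc
      have hgh : g * h = h * g := hc g List.mem_cons_self
      have ht : ∀ x ∈ t, x * h = h * x := fun x hx => hc x (List.mem_cons_of_mem g hx)
      have htp : t.prod * h = h * t.prod := by
        have : Commute t.prod h :=
          (Commute.list_prod_left _ _ (fun x hx => ht x hx))
        exact this
      rw [List.prod_cons, List.map_cons, List.prod_cons,
        phase_mul_aux α hα_cocycle g t.prod h hgh htp, ih h ht]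
end

section
/- Let G be a group, let α be a U(1)-valued 2-cocycle on G, and let g, h, t ∈ G with gh = hg. Then the phase is conjugation invariant on commuting pairs: γ(α)(tgt⁻¹, tht⁻¹) = γ(α)(g, h). -/
/-!
Conjugating the arguments of a 2-cocycle by `t` changes it by a coboundary:
`α (tgt⁻¹) (tht⁻¹) = α g h · β (gh) / (β g · β h)` for the 1-cochain `β = conjCochain α t`.
When `gh = hg` the coboundary factor is symmetric in `g` and `h`, so it cancels in the phase.
-/

section

variable {G A : Type*} [Group G] [CommGroup A]

/-- In the twisted group algebra `δ_t δ_g = conjCochain α t g • δ_{tgt⁻¹} δ_t`. -/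
def conjCochain (α : G → G → A) (t g : G) : A := α t g / α (t * g * t⁻¹) t

theorem cocycle_conj_mul_conjCochain (α : G → G → A)
    (hα : ∀ g h k : G, α g (h * k) * α h k = α g h * α (g * h) k) (t g h : G) :
    α (t * g * t⁻¹) (t * h * t⁻¹) * (conjCochain α t g * conjCochain α t h) =
      α g h * conjCochain α t (g * h) := by
  have h₁ := hα t g h
  have h₂ := hα (t * g * t⁻¹) t h
  have h₃ := hα (t * g * t⁻¹) (t * h * t⁻¹) t
  have hgh : t * g * t⁻¹ * (t * h * t⁻¹) = t * (g * h) * t⁻¹ := by group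
  simp only [inv_mul_cancel_right, hgh] at h₂ h₃
  rw [conjCochain, conjCochain, conjCochain, div_mul_div_comm, mul_div_assoc', mul_div_assoc',
    div_eq_div_iff_mul_eq_mul]
  calc α (t * g * t⁻¹) (t * h * t⁻¹) * (α t g * α t h) * α (t * (g * h) * t⁻¹) t
      = α (t * g * t⁻¹) (t * h * t⁻¹) * α (t * (g * h) * t⁻¹) t * α t g * α t h := by ac_rfl
    _ = α (t * g * t⁻¹) (t * h) * α t h * α (t * h * t⁻¹) t * α t g := by rw [← h₃]; ac_rfl
    _ = α t g * α (t * g) h * α (t * g * t⁻¹) t * α (t * h * t⁻¹) t := by rw [h₂]; ac_rfl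
    _ = α g h * α t (g * h) * (α (t * g * t⁻¹) t * α (t * h * t⁻¹) t) := by rw [← h₁]; ac_rfl

end

theorem phase_conj_invariant_general {G : Type*} [Group G] (α : G → G → Circle)
    (hα_cocycle : ∀ g h k : G, α g (h * k) * α h k = α g h * α (g * h) k) :
    ∀ g h t : G, g * h = h * g →
      α (t * g * t⁻¹) (t * h * t⁻¹) * (α (t * h * t⁻¹) (t * g * t⁻¹))⁻¹ =
        α g h * (α h g)⁻¹ := by
  intro g h t hgh
  have hg := cocycle_conj_mul_conjCochain α hα_cocycle t g h
  have hh := cocycle_conj_mul_conjCochain α hα_cocycle t h g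
  rw [mul_comm (conjCochain α t h), ← hgh] at hh
  set β := conjCochain α t g * conjCochain α t h
  calc α (t * g * t⁻¹) (t * h * t⁻¹) * (α (t * h * t⁻¹) (t * g * t⁻¹))⁻¹
      = α (t * g * t⁻¹) (t * h * t⁻¹) * β / (α (t * h * t⁻¹) (t * g * t⁻¹) * β) := by
        rw [mul_div_mul_right_eq_div, div_eq_mul_inv]
    _ = α g h * (α h g)⁻¹ := by rw [hg, hh, mul_div_mul_right_eq_div, div_eq_mul_inv]

/-- For a `U(1)`-valued 2-cocycle `α` on `G`, the phase is conjugation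
invariant on commuting pairs: if `gh = hg` then
`γ(α)(tgt⁻¹, tht⁻¹) = γ(α)(g, h)` for every `t ∈ G`. -/
theorem phase_conj_invariant {G : Type*} [Group G] (α : G → G → Circle)
    (hα_one_right : ∀ g : G, α g 1 = 1) (hα_one_left : ∀ g : G, α 1 g = 1)
    (hα_cocycle : ∀ g h k : G, α g (h * k) * α h k = α g h * α (g * h) k) :
    ∀ g h t : G, g * h = h * g →
      α (t * g * t⁻¹) (t * h * t⁻¹) * (α (t * h * t⁻¹) (t * g * t⁻¹))⁻¹ =
        α g h * (α h g)⁻¹ :=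
  phase_conj_invariant_general α hα_cocycle
end

section
/- Let G be an abelian group and let α be a U(1)-valued 2-cocycle on G. Then the phase γ(α) : G × G → U(1) is an alternating bicharacter: γ(α)(g, hk) = γ(α)(g,h)·γ(α)(g,k) and γ(α)(gh, k) = γ(α)(g,k)·γ(α)(h,k) for all g,h,k ∈ G, and γ(α)(g,g) = 1 for all g ∈ G. -/
private lemma aux_key {M : Type*} [CommGroup M] (A B C D E F P Q R : M)
    (h1 : A * B = C * D) (h2 : E * F = B * P) (h3 : E * Q = R * D) :
    A * (R * F) = P * (C * Q) := by
  have hB : A * (R * F) * B = P * (C * Q) * B := by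
    calc A * (R * F) * B = (A * B) * (R * F) := by ac_rfl
    _ = (C * D) * (R * F) := by rw [h1]
    _ = (R * D) * F * C := by ac_rfl
    _ = (E * Q) * F * C := by rw [h3]
    _ = (E * F) * (Q * C) := by ac_rfl
    _ = (B * P) * (Q * C) := by rw [h2]
    _ = P * (C * Q) * B := by ac_rfl
  exact mul_right_cancel hB

/-- For a `U(1)`-valued 2-cocycle `α` on an abelian group `G`, the phase
`γ(α)(g,h) = α(g,h)·α(h,g)⁻¹` is an alternating bicharacter: it is multiplicative in
each variable and `γ(α)(g,g) = 1`. -/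
theorem phase_alternating_bicharacter {G : Type*} [CommGroup G] (α : G → G → Circle)
    (hα_one_right : ∀ g : G, α g 1 = 1) (hα_one_left : ∀ g : G, α 1 g = 1)
    (hα_cocycle : ∀ g h k : G, α g (h * k) * α h k = α g h * α (g * h) k) :
    (∀ g h k : G,
        α g (h * k) * (α (h * k) g)⁻¹ = (α g h * (α h g)⁻¹) * (α g k * (α k g)⁻¹)) ∧
    (∀ g h k : G,
        α (g * h) k * (α k (g * h))⁻¹ = (α g k * (α k g)⁻¹) * (α h k * (α k h)⁻¹)) ∧
    (∀ g : G, α g g * (α g g)⁻¹ = 1) := by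
  have part1 : ∀ g h k : G,
      α g (h * k) * (α (h * k) g)⁻¹ = (α g h * (α h g)⁻¹) * (α g k * (α k g)⁻¹) := by
    intro g h k
    have h1 := hα_cocycle g h k
    have h2 := hα_cocycle h k g
    have h3 := hα_cocycle h g k
    rw [mul_comm k g] at h2
    rw [mul_comm h g] at h3
    have key := aux_key (α g (h*k)) (α h k) (α g h) (α (g*h) k) (α h (g*k))
      (α k g) (α (h*k) g) (α g k) (α h g) h1 h2 h3
    rw [← div_eq_mul_inv, ← div_eq_mul_inv, ← div_eq_mul_inv, div_mul_div_comm,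
      div_eq_div_iff_mul_eq_mul]
    exact key.trans (by ac_rfl)
  refine ⟨part1, ?_, ?_⟩
  · intro g h k
    have h2 := congrArg Inv.inv (part1 k g h)
    simp only [mul_inv, inv_inv] at h2
    rw [mul_comm (α (g*h) k), h2]
    ac_rfl
  · intro g
    simp
end

section
/- Let G be a cyclic group (not necessarily finite) and let α be a U(1)-valued 2-cocycle on G. Then the phase of α is identically trivial: γ(α)(g,h) = 1 for all g, h ∈ G. -/
/-- For a `U(1)`-valued 2-cocycle `α` on a cyclic group `G` (not
necessarily finite), the phase is identically trivial: `γ(α)(g,h) = 1` for all `g,h`. -/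
theorem phase_trivial_of_cyclic {G : Type*} [Group G] [IsCyclic G]
    (α : G → G → Circle)
    (hα_one_right : ∀ g : G, α g 1 = 1) (hα_one_left : ∀ g : G, α 1 g = 1)
    (hα_cocycle : ∀ g h k : G, α g (h * k) * α h k = α g h * α (g * h) k) :
    ∀ g h : G, α g h * (α h g)⁻¹ = 1 := by
  obtain ⟨x, hx⟩ := IsCyclic.exists_generator (α := G)
  have hcomm : ∀ a b : G, a * b = b * a := by
    intro a b
    obtain ⟨m, rfl⟩ := hx a
    obtain ⟨n, rfl⟩ := hx b
    rw [← zpow_add, ← zpow_add, add_comm]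
  -- the phase
  set γ : G → G → Circle := fun g h => α g h * (α h g)⁻¹ with hγ
  have hantisym : ∀ g h : G, γ h g = (γ g h)⁻¹ := by
    intro g h
    simp [hγ, mul_comm]
  -- bimultiplicativity in the second argument
  have hmul : ∀ g h k : G, γ g (h * k) = γ g h * γ g k := by
    intro g h k
    have e1 : α g (h * k) = α g h * α (g * h) k * (α h k)⁻¹ :=
      eq_mul_inv_of_mul_eq (hα_cocycle g h k)
    have e3 : α h (g * k) = α h g * α (g * h) k * (α g k)⁻¹ := by
      have := hα_cocycle h g k
      rw [hcomm h g] at this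
      exact eq_mul_inv_of_mul_eq this
    have e2 : α (h * k) g = (α h k)⁻¹ * (α h (g * k) * α k g) := by
      have := hα_cocycle h k g
      rw [hcomm k g] at this
      exact eq_inv_mul_of_mul_eq this.symm
    simp only [hγ, e1, e2, e3]
    rw [Circle.ext_iff]
    push_cast
    field_simp
  -- γ g · is a monoid hom
  have hone : ∀ g : G, γ g 1 = 1 := by
    intro g; simp [hγ, hα_one_right, hα_one_left]
  have hzpow : ∀ (g h : G) (n : ℤ), γ g (h ^ n) = (γ g h) ^ n := by
    intro g h n
    let f : G →* Circle := { toFun := γ g, map_one' := hone g, map_mul' := hmul g }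
    exact map_zpow f h n
  have hself : ∀ g : G, γ g g = 1 := by
    intro g; simp [hγ]
  intro g h
  obtain ⟨m, rfl⟩ := hx g
  obtain ⟨n, rfl⟩ := hx h
  show γ (x ^ m) (x ^ n) = 1
  rw [hzpow, hantisym x (x ^ m), hzpow, hself]
  simp
end

section
/- Let n, m be positive integers and let G = ℤ/n × ℤ/m. Then the second group cohomology of G with coefficients in the trivial G-module ℂˣ (the multiplicative group of nonzero complex numbers, viewed additively as a ℤ-module with trivial G-action) is isomorphic as an abelian group to ℤ/gcd(n,m): H²(ℤ/n × ℤ/m, ℂˣ) ≅ ℤ/gcd(n,m). -/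
/-!
For a cocycle `f` with trivial coefficients on an abelian group, `f(x, y) - f(y, x)` is an
alternating bilinear form that vanishes on coboundaries. On `ℤ/n × ℤ/m` it is determined by its
value at the two standard generators, which is killed by `gcd(n, m)`; the bilinear cocycles
`((a, b), (a', b')) ↦ χ(k a b')` realise every such value. A cocycle whose form vanishes is
symmetric, so it defines an abelian extension, which splits because `ℂˣ` is divisible. Hence `H²`
is the `gcd(n, m)`-torsion of `ℂˣ`, a cyclic group of order `gcd(n, m)`.
-/

open Function groupCohomology

section TrivialCocycle

variable {G M : Type*} [AddCommGroup M]

def IsTrivialCocycle₂ [Mul G] (f : G × G → M) : Prop :=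
  ∀ g h j : G, f (g * h, j) + f (g, h) = f (h, j) + f (g, h * j)

theorem isTrivialCocycle₂_of_bilinear [Mul G] (B : G → G → M)
    (hl : ∀ x y z, B (x * y) z = B x z + B y z) (hr : ∀ x y z, B x (y * z) = B x y + B x z) :
    IsTrivialCocycle₂ fun p : G × G => B p.1 p.2 := by
  intro g h j
  simp only [hl, hr]
  abel

/-- The commutator of lifts of `x` and `y` in the central extension defined by `f`. -/
def skewForm (f : G × G → M) (x y : G) : M := f (x, y) - f (y, x)

theorem skewForm_swap (f : G × G → M) (x y : G) : skewForm f y x = -skewForm f x y :=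
  (neg_sub _ _).symm

theorem skewForm_self (f : G × G → M) (x : G) : skewForm f x x = 0 := sub_self _

theorem skewForm_sub (f f' : G × G → M) (x y : G) :
    skewForm (f - f') x y = skewForm f x y - skewForm f' x y := by
  simp only [skewForm, Pi.sub_apply]; abel

namespace IsTrivialCocycle₂

variable {f : G × G → M}

theorem skewForm_mul_left [CommMonoid G] (hf : IsTrivialCocycle₂ f) (x y z : G) :
    skewForm f (x * y) z = skewForm f x z + skewForm f y z := by
  have e1 := hf x y z
  have e2 := hf z x y
  have e3 := hf x z y
  rw [mul_comm z x] at e2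
  rw [mul_comm z y] at e3
  simp only [skewForm]
  linear_combination (norm := abel1) e1 + e2 - e3

theorem skewForm_mul_right [CommMonoid G] (hf : IsTrivialCocycle₂ f) (x y z : G) :
    skewForm f x (y * z) = skewForm f x y + skewForm f x z := by
  rw [skewForm_swap, hf.skewForm_mul_left, skewForm_swap f x y, skewForm_swap f x z, neg_add,
    neg_neg, neg_neg]

theorem skewForm_one_left [CommMonoid G] (hf : IsTrivialCocycle₂ f) (y : G) :
    skewForm f 1 y = 0 := by
  simpa using hf.skewForm_mul_left 1 1 y

theorem skewForm_pow_left [CommMonoid G] (hf : IsTrivialCocycle₂ f) (x y : G) (n : ℕ) :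
    skewForm f (x ^ n) y = n • skewForm f x y := by
  induction n with
  | zero => rw [zero_nsmul, pow_zero, hf.skewForm_one_left]
  | succ n ih => rw [succ_nsmul, ← ih, pow_succ, hf.skewForm_mul_left]

theorem skewForm_eq_zero_of_closure_eq_top [CommGroup G] (hf : IsTrivialCocycle₂ f) {S : Set G}
    (hS : Subgroup.closure S = ⊤) (hfS : ∀ x ∈ S, ∀ y ∈ S, skewForm f x y = 0) (x y : G) :
    skewForm f x y = 0 := by
  have vanish (φ : G → M) (hφ : ∀ a b, φ (a * b) = φ a + φ b) (hφS : ∀ a ∈ S, φ a = 0) (a : G) :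
      φ a = 0 :=
    congrArg Multiplicative.toAdd <| DFunLike.congr_fun
      (MonoidHom.eq_of_eqOn_dense hS (f := MonoidHom.mk' (Multiplicative.ofAdd ∘ φ) hφ) (g := 1)
        hφS) a
  exact vanish (skewForm f · y) (hf.skewForm_mul_left · · y)
    (fun a ha => vanish (skewForm f a) (hf.skewForm_mul_right a) (hfS a ha) y) x

end IsTrivialCocycle₂

/-- `G × M` with `(g, a) + (h, b) = (g h, a + b + f (g, h))`; its zero is `(1, -f (1, 1))`, as `f`
need not be normalised. -/
@[ext]
structure CocycleExtension (f : G × G → M) where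
  base : G
  fiber : M

namespace CocycleExtension

variable [CommGroup G] (f : G × G → M)

instance : Add (CocycleExtension f) :=
  ⟨fun x y => ⟨x.base * y.base, x.fiber + y.fiber + f (x.base, y.base)⟩⟩

instance : Zero (CocycleExtension f) := ⟨⟨1, -f (1, 1)⟩⟩

instance : Neg (CocycleExtension f) :=
  ⟨fun x => ⟨x.base⁻¹, -x.fiber - f (x.base, x.base⁻¹) - f (1, 1)⟩⟩

variable {f}

theorem add_def (x y : CocycleExtension f) :
    x + y = ⟨x.base * y.base, x.fiber + y.fiber + f (x.base, y.base)⟩ := rfl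

theorem zero_def : (0 : CocycleExtension f) = ⟨1, -f (1, 1)⟩ := rfl

theorem neg_def (x : CocycleExtension f) :
    -x = ⟨x.base⁻¹, -x.fiber - f (x.base, x.base⁻¹) - f (1, 1)⟩ := rfl

abbrev addCommGroup (hf : IsTrivialCocycle₂ f) (hsymm : ∀ x y, f (x, y) = f (y, x)) :
    AddCommGroup (CocycleExtension f) :=
  have one_fst (g : G) : f (1, g) = f (1, 1) := by simpa using (hf 1 1 g).symm
  have one_snd (g : G) : f (g, 1) = f (1, 1) := by simpa using hf g 1 1
  { add_assoc x y z := by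
      ext
      · exact mul_assoc _ _ _
      · simp only [add_def]; linear_combination (norm := abel1) hf x.base y.base z.base
    zero_add x := by ext <;> simp [add_def, zero_def, one_fst]
    add_zero x := by ext <;> simp [add_def, zero_def, one_snd]
    neg_add_cancel x := by
      ext
      · exact inv_mul_cancel _
      · simp only [add_def, neg_def, zero_def, hsymm x.base⁻¹]; abel
    add_comm x y := by
      ext
      · exact mul_comm _ _
      · simp only [add_def, hsymm x.base, add_comm x.fiber]
    nsmul := nsmulRec
    zsmul := zsmulRec }

end CocycleExtension

/-- The extension defined by `f` is abelian, hence splits because `M` is injective. -/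
theorem IsTrivialCocycle₂.exists_coboundary_of_symm [CommGroup G] [DivisibleBy M ℤ]
    {f : G × G → M} (hf : IsTrivialCocycle₂ f) (hsymm : ∀ x y, f (x, y) = f (y, x)) :
    ∃ x : G → M, ∀ g h, x h - x (g * h) + x g = f (g, h) := by
  let := CocycleExtension.addCommGroup hf hsymm
  have one_snd (g : G) : f (g, 1) = f (1, 1) := by simpa using hf g 1 1
  let i : M →+ CocycleExtension f :=
    AddMonoidHom.mk' (fun a => ⟨1, a - f (1, 1)⟩) fun a b =>
      CocycleExtension.ext (one_mul 1).symm <| by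
        change a + b - f (1, 1) = a - f (1, 1) + (b - f (1, 1)) + f (1, 1); abel
  have hi : Injective i := fun a b hab => by
    simpa [i] using congrArg CocycleExtension.fiber hab
  obtain ⟨r, hr⟩ := (Module.Baer.of_divisible M).extension_property_addMonoidHom i hi (.id M)
  refine ⟨fun g => r ⟨g, 0⟩, fun g h => ?_⟩
  have split : (⟨g, 0⟩ + ⟨h, 0⟩ : CocycleExtension f) = ⟨g * h, 0⟩ + i (f (g, h)) := by
    ext <;> simp [CocycleExtension.add_def, i, one_snd]
  have := congrArg r split
  rw [map_add, map_add, ← AddMonoidHom.comp_apply r i, hr, AddMonoidHom.id_apply] at this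
  linear_combination (norm := abel1) this

end TrivialCocycle

section TrivialRep

universe u

variable {k G : Type u} [CommRing k]

theorem mem_cocycles₂_iff_isTrivialCocycle₂ [Group G] {A : Rep k G} [A.IsTrivial]
    (f : G × G → A) :
    f ∈ cocycles₂ A ↔ IsTrivialCocycle₂ f := by
  simp only [mem_cocycles₂_iff, Representation.isTrivial_apply]
  rfl

theorem mem_coboundaries₂_iff_of_isTrivial [Group G] {A : Rep k G} [A.IsTrivial]
    (f : G × G → A) :
    f ∈ coboundaries₂ A ↔ ∃ x : G → A, ∀ g h, x h - x (g * h) + x g = f (g, h) := by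
  constructor
  · rintro ⟨x, rfl⟩
    exact ⟨x, fun g h => by simp⟩
  · rintro ⟨x, hx⟩
    refine ⟨x, funext fun p => ?_⟩
    simp [← hx]

theorem skewForm_eq_zero_of_mem_coboundaries₂ [CommGroup G] {A : Rep k G} [A.IsTrivial]
    {f : G × G → A} (hf : f ∈ coboundaries₂ A) (x y : G) : skewForm f x y = 0 := by
  obtain ⟨c, hc⟩ := (mem_coboundaries₂_iff_of_isTrivial f).1 hf
  rw [skewForm, ← hc, ← hc, mul_comm y x]
  abel

end TrivialRep

section ZModProd

variable {M : Type} [AddCommGroup M] (n m : ℕ)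

local notation "Gₙₘ" => Multiplicative (ZMod n × ZMod m)

def zmodProdPairing (x y : Gₙₘ) : ZMod (n.gcd m) :=
  ZMod.castHom (Nat.gcd_dvd_left n m) _ x.toAdd.1 *
    ZMod.castHom (Nat.gcd_dvd_right n m) _ y.toAdd.2

theorem zmodProdPairing_mul_left (x y z : Gₙₘ) :
    zmodProdPairing n m (x * y) z = zmodProdPairing n m x z + zmodProdPairing n m y z := by
  simp only [zmodProdPairing, toAdd_mul, Prod.fst_add, map_add, add_mul]

theorem zmodProdPairing_mul_right (x y z : Gₙₘ) :
    zmodProdPairing n m x (y * z) = zmodProdPairing n m x y + zmodProdPairing n m x z := by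
  simp only [zmodProdPairing, toAdd_mul, Prod.snd_add, map_add, mul_add]

def pairingCocycle (χ : ZMod (n.gcd m) →+ M) :
    ZMod (n.gcd m) →+ cocycles₂ (Rep.trivial ℤ Gₙₘ M) where
  toFun k := ⟨fun p => χ (k * zmodProdPairing n m p.1 p.2),
    (mem_cocycles₂_iff_isTrivialCocycle₂ _).2 <|
      isTrivialCocycle₂_of_bilinear (fun x y => χ (k * zmodProdPairing n m x y))
        (fun x y z => by simp only [zmodProdPairing_mul_left, mul_add, map_add])
        (fun x y z => by simp only [zmodProdPairing_mul_right, mul_add, map_add])⟩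
  map_zero' := by ext; exact (congrArg χ (zero_mul _)).trans χ.map_zero
  map_add' k l := by ext; exact (congrArg χ (add_mul _ _ _)).trans (χ.map_add _ _)

theorem closure_zmodProd_generators_eq_top :
    Subgroup.closure {Multiplicative.ofAdd ((1, 0) : ZMod n × ZMod m), .ofAdd (0, 1)} = ⊤ := by
  refine eq_top_iff.2 fun p _ => ?_
  have hp : p = .ofAdd ((1, 0) : ZMod n × ZMod m) ^ (p.toAdd.1.cast : ℤ) *
      .ofAdd ((0, 1) : ZMod n × ZMod m) ^ (p.toAdd.2.cast : ℤ) := by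
    apply Multiplicative.toAdd.injective
    ext <;> simp
  rw [hp]
  exact mul_mem (zpow_mem (Subgroup.subset_closure (by simp)) _)
    (zpow_mem (Subgroup.subset_closure (by simp)) _)

local notation "x₀" => Multiplicative.ofAdd ((1, 0) : ZMod n × ZMod m)
local notation "y₀" => Multiplicative.ofAdd ((0, 1) : ZMod n × ZMod m)

theorem skewForm_pairingCocycle (χ : ZMod (n.gcd m) →+ M) (k : ZMod (n.gcd m)) :
    skewForm (pairingCocycle n m χ k) x₀ y₀ = χ k := by
  change χ (k * zmodProdPairing n m x₀ y₀) - χ (k * zmodProdPairing n m y₀ x₀) = χ k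
  simp only [zmodProdPairing, toAdd_ofAdd, map_one, map_zero, mul_one, mul_zero, sub_zero]

theorem gcd_nsmul_skewForm_eq_zero (F : cocycles₂ (Rep.trivial ℤ Gₙₘ M)) :
    n.gcd m • skewForm F x₀ y₀ = 0 := by
  have hF := (mem_cocycles₂_iff_isTrivialCocycle₂ ⇑F).1 F.2
  have hx₀ : x₀ ^ n = 1 := by rw [← ofAdd_nsmul]; simp
  have hy₀ : y₀ ^ m = 1 := by rw [← ofAdd_nsmul]; simp
  have hn : n • skewForm F x₀ y₀ = 0 := by
    rw [← hF.skewForm_pow_left, hx₀, hF.skewForm_one_left]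
  have hm : m • skewForm F x₀ y₀ = 0 := by
    rw [← neg_eq_zero, ← smul_neg, ← skewForm_swap, ← hF.skewForm_pow_left, hy₀,
      hF.skewForm_one_left]
  simp only [← addOrderOf_dvd_iff_nsmul_eq_zero] at hn hm ⊢
  exact Nat.dvd_gcd hn hm

noncomputable def pairingClass (χ : ZMod (n.gcd m) →+ M) :
    ZMod (n.gcd m) →+ H2 (Rep.trivial ℤ Gₙₘ M) :=
  (H2π _).hom.toAddMonoidHom.comp (pairingCocycle n m χ)

theorem pairingClass_injective {χ : ZMod (n.gcd m) →+ M} (hχ : Injective χ) :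
    Injective (pairingClass n m χ) := by
  refine (injective_iff_map_eq_zero _).2 fun k hk => hχ ?_
  rw [map_zero, ← skewForm_pairingCocycle]
  exact skewForm_eq_zero_of_mem_coboundaries₂ ((H2π_eq_zero_iff _).1 hk) _ _

theorem pairingClass_surjective [DivisibleBy M ℤ] {χ : ZMod (n.gcd m) →+ M}
    (hχ : ∀ s : M, n.gcd m • s = 0 → ∃ k, χ k = s) : Surjective (pairingClass n m χ) := by
  intro q
  induction q using H2_induction_on with | h F =>
  obtain ⟨k, hk⟩ := hχ _ (gcd_nsmul_skewForm_eq_zero n m F)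
  refine ⟨k, (H2π_eq_iff _ _).2 ?_⟩
  set f : _ → M := ⇑(pairingCocycle n m χ k) - ⇑F
  have hf : IsTrivialCocycle₂ f :=
    (mem_cocycles₂_iff_isTrivialCocycle₂ _).1 (pairingCocycle n m χ k - F).2
  have hskew : ∀ x y, skewForm f x y = 0 := by
    refine hf.skewForm_eq_zero_of_closure_eq_top (closure_zmodProd_generators_eq_top n m) ?_
    have hxy : skewForm f x₀ y₀ = 0 := by
      rw [skewForm_sub, skewForm_pairingCocycle, hk, sub_self]
    rintro x (rfl | rfl) y (rfl | rfl) <;>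
      simp only [skewForm_self, hxy, skewForm_swap f x₀ y₀, neg_zero]
  obtain ⟨c, hc⟩ := hf.exists_coboundary_of_symm fun x y => sub_eq_zero.1 (hskew x y)
  exact (mem_coboundaries₂_iff_of_isTrivial _).2 ⟨c, hc⟩

noncomputable def H2ZModProdAddEquiv [DivisibleBy M ℤ] (χ : ZMod (n.gcd m) →+ M)
    (hχ : Injective χ) (hχ_range : ∀ s : M, n.gcd m • s = 0 → ∃ k, χ k = s) :
    H2 (Rep.trivial ℤ Gₙₘ M) ≃+ ZMod (n.gcd m) :=
  (AddEquiv.ofBijective (pairingClass n m χ)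
    ⟨pairingClass_injective n m hχ, pairingClass_surjective n m hχ_range⟩).symm

end ZModProd

theorem IsPrimitiveRoot.exists_zmod_addHom_units {R : Type*} [CommRing R] [IsDomain R] {d : ℕ}
    [NeZero d] {ζ : Rˣ} (hζ : IsPrimitiveRoot ζ d) :
    ∃ χ : ZMod d →+ Additive Rˣ, Injective χ ∧ ∀ s : Additive Rˣ, d • s = 0 → ∃ k, χ k = s := by
  let e := hζ.zmodEquivZPowers
  refine ⟨(Subgroup.zpowers ζ).subtype.toAdditive.comp e.toAddMonoidHom,
    Subtype.val_injective.comp e.injective, fun s hs => ?_⟩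
  have hmem : s.toMul ∈ Subgroup.zpowers ζ := by
    rw [hζ.zpowers_eq, mem_rootsOfUnity, ← toMul_nsmul, hs, toMul_zero]
  exact ⟨e.symm (.ofMul ⟨_, hmem⟩), by simp⟩

noncomputable instance IsAlgClosed.divisibleByUnits (K : Type*) [Field K] [IsAlgClosed K] :
    DivisibleBy (Additive Kˣ) ℤ :=
  @AddGroup.divisibleByIntOfDivisibleByNat _ _ <| divisibleByOfSMulRightSurj _ _ fun hn a => by
    obtain ⟨z, hz⟩ := IsAlgClosed.exists_pow_nat_eq (a.toMul : K) (Nat.pos_of_ne_zero hn)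
    have hz₀ : z ≠ 0 := by rintro rfl; exact a.toMul.ne_zero (by rw [← hz, zero_pow hn])
    exact ⟨.ofMul (Units.mk0 z hz₀),
      congrArg Additive.ofMul (Units.ext (by simpa using hz) : Units.mk0 z hz₀ ^ _ = a.toMul)⟩

theorem h2_zmod_prod_units_complex_general (n m : ℕ) (hn : 0 < n) :
    Nonempty
      (groupCohomology.H2
          (Rep.trivial ℤ (Multiplicative (ZMod n × ZMod m)) (Additive ℂˣ)) ≃+
        ZMod (Nat.gcd n m)) := by
  have : NeZero (n.gcd m) := ⟨(Nat.gcd_pos_of_pos_left m hn).ne'⟩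
  obtain ⟨ζ, hζ⟩ := HasEnoughRootsOfUnity.exists_primitiveRoot ℂ (n.gcd m)
  obtain ⟨χ, hχ, hχ_range⟩ := (hζ.isUnit_unit (NeZero.ne _)).exists_zmod_addHom_units
  exact ⟨H2ZModProdAddEquiv n m χ hχ hχ_range⟩

/-- For positive integers `n, m`, the second group cohomology of
`ℤ/n × ℤ/m` with coefficients in the trivial module `ℂˣ` is isomorphic (as an abelian
group) to `ℤ/gcd(n,m)`. -/
theorem h2_zmod_prod_units_complex (n m : ℕ) (hn : 0 < n) (hm : 0 < m) :
    Nonempty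
      (groupCohomology.H2
          (Rep.trivial ℤ (Multiplicative (ZMod n × ZMod m)) (Additive ℂˣ)) ≃+
        ZMod (Nat.gcd n m)) :=
  h2_zmod_prod_units_complex_general n m hn
end
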